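/- For every m ≥ 1 and every 0 ≤ i ≤ m, the following identity holds in ℤ[x_1,…,x_m]: L_i = Σ_{k=0}^{i} δ_{i,k}^m · B_k, where δ_{i,k}^m = Σ_{j=k}^{i} (−1)^{j−k} · binom(m−k, j−k) · binom(m, i−j), L_i = e_i(1,…,1,x_1,…,x_m) and B_k = e_k(1+x_1,…,1+x_m). -/

import Mathlib

/-!
Since `∏_{r ∈ s} (1 + r t) = ∑_k e_k(s) t^k`, the claim is a statement about the coefficient of
`t^i` in `(1 + t)^m ∏_j (1 + x_j t)`. Writing `1 + x_j t = (1 - t) + (1 + x_j) t`, the homogeneous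
form of Vieta's formula gives `∏_j (1 + x_j t) = ∑_k B_k t^k (1 - t)^(m - k)`, and the coefficient
of `t^i` in `(1 + t)^m t^k (1 - t)^(m - k)` is exactly `δ_{i,k}^m`. The sum over `k ≤ m` may be cut
to `k ≤ i` since `δ_{i,k}^m = 0` for `k > i`, and `B_k = 0` for `k > m`.
-/

open MvPolynomial

/-- `P_i = e_i(x_1, …, x_m)`, the `i`-th elementary symmetric polynomial in the variables. -/
noncomputable def Psym (m i : ℕ) : MvPolynomial (Fin m) ℤ :=
  (((Finset.univ : Finset (Fin m)).val.map
    fun j => (X j : MvPolynomial (Fin m) ℤ)).esymm i)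

/-- `L_i = e_i(1, …, 1, x_1, …, x_m)`, the `i`-th elementary symmetric polynomial in `2m`
arguments, of which `m` are equal to `1`. -/
noncomputable def Lsym (m i : ℕ) : MvPolynomial (Fin m) ℤ :=
  ((Multiset.replicate m (1 : MvPolynomial (Fin m) ℤ) +
    (Finset.univ : Finset (Fin m)).val.map
      fun j => (X j : MvPolynomial (Fin m) ℤ)).esymm i)

/-- `B_i = e_i(1 + x_1, …, 1 + x_m)`. -/
noncomputable def Bsym (m i : ℕ) : MvPolynomial (Fin m) ℤ :=
  (((Finset.univ : Finset (Fin m)).val.map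
    fun j => (1 + X j : MvPolynomial (Fin m) ℤ)).esymm i)

/-- `δ_{i,k}^m = Σ_{j=k}^{i} (-1)^{j-k} · binom(m-k, j-k) · binom(m, i-j)`. -/
def deltaCoef (m i k : ℕ) : ℤ :=
  ∑ j ∈ Finset.Icc k i,
    (-1 : ℤ) ^ (j - k) * ((m - k).choose (j - k) : ℤ) * (m.choose (i - j) : ℤ)

open Polynomial

namespace Multiset

variable {R S : Type*} [CommSemiring R] [CommSemiring S]

theorem esymm_eq_zero_of_card_lt {s : Multiset R} {n : ℕ} (h : card s < n) : s.esymm n = 0 := by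
  rw [esymm, powersetCard_eq_empty n h, map_zero, sum_zero]

theorem esymm_map_ringHom {F : Type*} [FunLike F R S] [RingHomClass F R S] (f : F)
    (s : Multiset R) (n : ℕ) :
    (s.map f).esymm n = f (s.esymm n) := by
  simp [esymm, powersetCard_map, map_multiset_sum, map_multiset_prod, map_map]

theorem prod_map_add_mul_eq_sum_esymm (s : Multiset R) (a b : R) :
    (s.map fun r => a + r * b).prod =
      ∑ j ∈ Finset.range (card s + 1), b ^ j * s.esymm j * a ^ (card s - j) := by
  have h := congrArg (Polynomial.eval a) (prod_X_add_C_eq_sum_esymm (s.map (b • ·)))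
  simp_rw [← pow_smul_esymm, card_map, map_map, eval_multiset_prod, map_map] at h
  simpa [eval_finsetSum, Function.comp_def, mul_comm, mul_assoc] using h

end Multiset

namespace Polynomial

variable {R : Type*}

theorem coeff_multiset_prod_one_add_C_mul_X [CommSemiring R] (s : Multiset R) (n : ℕ) :
    (s.map fun r => 1 + C r * X).prod.coeff n = s.esymm n := by
  have h := (s.map C).prod_map_add_mul_eq_sum_esymm 1 X
  simp_rw [Multiset.map_map, Function.comp_def, Multiset.card_map, Multiset.esymm_map_ringHom,
    one_pow, mul_one] at h
  rw [h, finsetSum_coeff]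
  simp_rw [X_pow_mul, coeff_C_mul_X_pow, Finset.sum_ite_eq, Finset.mem_range]
  split_ifs with hn
  · rfl
  · exact (Multiset.esymm_eq_zero_of_card_lt (by omega)).symm

theorem multiset_prod_one_add_C_mul_X [CommRing R] (s : Multiset R) :
    (s.map fun r => 1 + C r * X).prod =
      ∑ k ∈ Finset.range (s.card + 1),
        X ^ k * C ((s.map (1 + ·)).esymm k) * (1 - X) ^ (s.card - k) := by
  have h := ((s.map (1 + ·)).map C).prod_map_add_mul_eq_sum_esymm (1 - X) X
  simp only [Multiset.esymm_map_ringHom] at h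
  simp only [Multiset.map_map, Multiset.card_map] at h
  rw [← h]
  congr 1
  refine Multiset.map_congr rfl fun r _ => ?_
  simp only [Function.comp_apply, map_add, map_one]
  ring

theorem coeff_one_sub_X_pow [CommRing R] (n l : ℕ) :
    ((1 - X : R[X]) ^ n).coeff l = (-1) ^ l * n.choose l := by
  rw [sub_eq_neg_add, add_pow]
  simp_rw [one_pow, mul_one, neg_pow (X : R[X]), ← C_eq_natCast, ← C_1, ← C_neg, ← C_pow,
    mul_right_comm _ (X ^ _), ← C_mul, finsetSum_coeff, coeff_C_mul_X_pow, Finset.sum_ite_eq,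
    Finset.mem_range]
  split_ifs with h
  · rfl
  · rw [Nat.choose_eq_zero_of_lt (by omega), Nat.cast_zero, mul_zero]

theorem coeff_one_add_X_pow_mul_X_pow_mul_one_sub_X_pow [CommRing R] (m k n i : ℕ) :
    ((1 + X : R[X]) ^ m * X ^ k * (1 - X) ^ n).coeff i =
      ∑ j ∈ Finset.Icc k i, (-1 : R) ^ (j - k) * n.choose (j - k) * m.choose (i - j) := by
  rw [show (1 + X : R[X]) ^ m * X ^ k * (1 - X) ^ n = X ^ k * ((1 - X) ^ n * (1 + X) ^ m) by ring,
    coeff_X_pow_mul', coeff_mul, Finset.Nat.sum_antidiagonal_eq_sum_range_succ_mk]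
  split_ifs with hki
  · rw [← Finset.Ico_add_one_right_eq_Icc, Finset.sum_Ico_eq_sum_range]
    refine Finset.sum_congr (by congr 1; omega) fun j hj => ?_
    rw [Finset.mem_range] at hj
    simp only [coeff_one_sub_X_pow, coeff_one_add_X_pow, Nat.add_sub_cancel_left]
    rw [show i - (k + j) = i - k - j by omega]
  · rw [Finset.Icc_eq_empty (by omega), Finset.sum_empty]

theorem _root_.Multiset.esymm_replicate_one_add [CommRing R] (s : Multiset R) (i : ℕ) :
    (Multiset.replicate s.card 1 + s).esymm i =
      ∑ k ∈ Finset.range (s.card + 1),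
        (∑ j ∈ Finset.Icc k i,
          (-1 : R) ^ (j - k) * (s.card - k).choose (j - k) * s.card.choose (i - j)) *
        (s.map (1 + ·)).esymm k := by
  rw [← coeff_multiset_prod_one_add_C_mul_X, Multiset.map_add, Multiset.prod_add,
    Multiset.map_replicate, Multiset.prod_replicate, map_one, one_mul,
    multiset_prod_one_add_C_mul_X, Finset.mul_sum, finsetSum_coeff]
  refine Finset.sum_congr rfl fun k _ => ?_
  rw [← coeff_one_add_X_pow_mul_X_pow_mul_one_sub_X_pow, mul_comm _ ((s.map (1 + ·)).esymm k),
    ← coeff_C_mul]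
  congr 1
  ring

end Polynomial

theorem stmt10_general (m : ℕ) (i : ℕ) :
    Lsym m i = ∑ k ∈ Finset.range (i + 1),
      (deltaCoef m i k : MvPolynomial (Fin m) ℤ) * Bsym m k := by
  have hvanish : ∀ k, min i m < k → (deltaCoef m i k : MvPolynomial (Fin m) ℤ) * Bsym m k = 0 := by
    intro k hk
    rcases min_lt_iff.mp hk with hik | hmk
    · simp [deltaCoef, Finset.Icc_eq_empty_of_lt hik]
    · rw [Bsym, Multiset.esymm_eq_zero_of_card_lt (by simpa using hmk), mul_zero]
  calc Lsym m i
        = ∑ k ∈ Finset.range (m + 1), (deltaCoef m i k : MvPolynomial (Fin m) ℤ) * Bsym m k := by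
        simpa [Lsym, Bsym, deltaCoef, Multiset.map_map, Function.comp_def] using
          (Finset.univ.val.map (X : Fin m → MvPolynomial (Fin m) ℤ)).esymm_replicate_one_add i
    _ = ∑ k ∈ Finset.range (min i m + 1), (deltaCoef m i k : MvPolynomial (Fin m) ℤ) * Bsym m k :=
      (Finset.sum_subset (Finset.range_subset_range.2 (by omega)) fun k _ hk =>
        hvanish k (by rw [Finset.mem_range] at hk; omega)).symm
    _ = _ := Finset.sum_subset (Finset.range_subset_range.2 (by omega)) fun k _ hk =>
        hvanish k (by rw [Finset.mem_range] at hk; omega)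

/-- For `m ≥ 1` and `0 ≤ i ≤ m`: `L_i = Σ_{k=0}^{i} δ_{i,k}^m · B_k` in `ℤ[x_1,…,x_m]`. -/
theorem stmt10 (m : ℕ) (hm : 1 ≤ m) (i : ℕ) (hi : i ≤ m) :
    Lsym m i = ∑ k ∈ Finset.range (i + 1),
      (deltaCoef m i k : MvPolynomial (Fin m) ℤ) * Bsym m k :=
  stmt10_general m i
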